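/- arXiv:2411.06533 — 4 statements merged into one kernel-verified Lean document; each statement's English description precedes it below -/
import Mathlib

section
/- Let 𝔠 > 0 and let P, Q, P′, Q′ ∈ ℝ⁴ be four-vectors with positive time components satisfying P·P = Q·Q = P′·P′ = Q′·Q′ = 𝔠² and P + Q = P′ + Q′. Then there exist a Lorentz transformation Λ and a unit vector ω ∈ 𝕊² ⊂ ℝ³ such that Λ(P+Q) = (√s,0,0,0)ᵀ, Λ(P−Q) = (0,p̄)ᵀ for some p̄ ∈ ℝ³ with |p̄| = 2g, and P′ = ½ Λ⁻¹ (√s, 2gω)ᵀ, Q′ = ½ Λ⁻¹ (√s, −2gω)ᵀ, where s := 2(P·Q + 𝔠²) and g := √((P·Q − 𝔠²)/2). -/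
/-!
By the reversed Cauchy–Schwarz inequality `P·Q ≥ 𝔠²`, the total momentum `K = P + Q` has
`K·K = s > 0`. Reflecting Minkowski space first in `(K + √s e₀)ᗮ` and then in `e₀ᗮ`
(`e₀ = timeUnit`) carries `K` to `√s e₀`; this composite `Λ` is the boost to the
centre-of-momentum frame. For any two momenta `A, B` on the mass shell `𝔠²` with `A + B = K`,
the difference `A − B` is orthogonal to `K`, so `Λ(A − B)` is purely spatial, of squared
length `−(A − B)·(A − B) = 2(A·B − 𝔠²)`. Since `K·K` is conserved, `P′·Q′ = P·Q`, so
`Λ(P′ − Q′) = 2g ω` for a unit vector `ω`, and `P′, Q′ = ½ Λ⁻¹(ΛK ± Λ(P′ − Q′))`.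
-/

open Matrix

/-- The Minkowski matrix D = diag(1, -1, -1, -1). -/
noncomputable def minkD : Matrix (Fin 4) (Fin 4) ℝ := Matrix.diagonal ![1, -1, -1, -1]

/-- A real 4×4 matrix Λ is a Lorentz transformation if ΛᵀDΛ = D. -/
def IsLorentz (Λ : Matrix (Fin 4) (Fin 4) ℝ) : Prop := Λᵀ * minkD * Λ = minkD

/-- The Lorentz inner product P·Q = p₀q₀ − p₁q₁ − p₂q₂ − p₃q₃. -/
def lDot (P Q : Fin 4 → ℝ) : ℝ := P 0 * Q 0 - P 1 * Q 1 - P 2 * Q 2 - P 3 * Q 3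

/-- The Euclidean norm on ℝ³. -/
noncomputable def norm3 (p : Fin 3 → ℝ) : ℝ := Real.sqrt (p 0 ^ 2 + p 1 ^ 2 + p 2 ^ 2)

lemma lDot_eq_dotProduct (P Q : Fin 4 → ℝ) : lDot P Q = P ⬝ᵥ minkD *ᵥ Q := by
  simp only [lDot, dotProduct, minkD, mulVec_diagonal, Fin.sum_univ_four, cons_val_zero,
    cons_val_one, cons_val]
  ring

lemma lDot_comm (P Q : Fin 4 → ℝ) : lDot P Q = lDot Q P := by
  simp only [lDot]; ring

@[simp] lemma lDot_add_left (P Q R : Fin 4 → ℝ) : lDot (P + Q) R = lDot P R + lDot Q R := by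
  simp only [lDot, Pi.add_apply]; ring

@[simp] lemma lDot_add_right (P Q R : Fin 4 → ℝ) : lDot P (Q + R) = lDot P Q + lDot P R := by
  simp only [lDot, Pi.add_apply]; ring

@[simp] lemma lDot_sub_left (P Q R : Fin 4 → ℝ) : lDot (P - Q) R = lDot P R - lDot Q R := by
  simp only [lDot, Pi.sub_apply]; ring

@[simp] lemma lDot_sub_right (P Q R : Fin 4 → ℝ) : lDot P (Q - R) = lDot P Q - lDot P R := by
  simp only [lDot, Pi.sub_apply]; ring

@[simp] lemma lDot_smul_left (a : ℝ) (P Q : Fin 4 → ℝ) : lDot (a • P) Q = a * lDot P Q := by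
  simp only [lDot, Pi.smul_apply, smul_eq_mul]; ring

@[simp] lemma lDot_smul_right (a : ℝ) (P Q : Fin 4 → ℝ) : lDot P (a • Q) = a * lDot P Q := by
  simp only [lDot, Pi.smul_apply, smul_eq_mul]; ring

def timeUnit : Fin 4 → ℝ := Pi.single 0 1

@[simp] lemma lDot_timeUnit (P : Fin 4 → ℝ) : lDot P timeUnit = P 0 := by
  simp [lDot, timeUnit]

@[simp] lemma timeUnit_lDot (P : Fin 4 → ℝ) : lDot timeUnit P = P 0 := by
  rw [lDot_comm, lDot_timeUnit]

@[simp] lemma timeUnit_zero : timeUnit 0 = 1 := rfl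

lemma smul_timeUnit (a : ℝ) : a • timeUnit = ![a, 0, 0, 0] := by
  ext i
  fin_cases i <;> simp [timeUnit]

lemma cons_eq_smul_timeUnit_add_cons (a : ℝ) (x : Fin 3 → ℝ) :
    (Fin.cons a x : Fin 4 → ℝ) = a • timeUnit + Fin.cons 0 x := by
  ext i
  refine Fin.cases ?_ (fun j => ?_) i <;> simp [timeUnit]

lemma lDot_eq_mul_sub_dotProduct (P Q : Fin 4 → ℝ) :
    lDot P Q = P 0 * Q 0 - Fin.tail P ⬝ᵥ Fin.tail Q := by
  simp only [lDot, dotProduct, Fin.tail, Fin.sum_univ_three, Fin.succ_zero_eq_one,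
    Fin.succ_one_eq_two, Fin.reduceSucc]
  ring

lemma dotProduct_self_nonneg {n : Type*} [Fintype n] (v : n → ℝ) : 0 ≤ v ⬝ᵥ v :=
  Finset.sum_nonneg fun i _ => mul_self_nonneg (v i)

lemma sq_dotProduct_le {n : Type*} [Fintype n] (v w : n → ℝ) :
    (v ⬝ᵥ w) ^ 2 ≤ (v ⬝ᵥ v) * (w ⬝ᵥ w) := by
  simpa only [dotProduct, sq] using Finset.sum_mul_sq_le_sq_mul_sq Finset.univ v w

lemma norm3_eq_sqrt_dotProduct (p : Fin 3 → ℝ) : norm3 p = √(p ⬝ᵥ p) := by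
  simp [norm3, dotProduct, Fin.sum_univ_three, sq]

lemma norm3_smul (a : ℝ) (p : Fin 3 → ℝ) : norm3 (a • p) = |a| * norm3 p := by
  rw [norm3_eq_sqrt_dotProduct, norm3_eq_sqrt_dotProduct, dotProduct_smul, smul_dotProduct,
    smul_eq_mul, smul_eq_mul, ← mul_assoc, Real.sqrt_mul (mul_self_nonneg a),
    Real.sqrt_mul_self_eq_abs]

lemma exists_norm3_eq_one_and_eq_smul (u : Fin 3 → ℝ) : ∃ ω, norm3 ω = 1 ∧ u = norm3 u • ω := by
  by_cases hu : u = 0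
  · exact ⟨![1, 0, 0], by simp [norm3], by simp [hu, norm3]⟩
  · have h : 0 < norm3 u := by
      rw [norm3_eq_sqrt_dotProduct]
      exact Real.sqrt_pos.2
        ((dotProduct_self_nonneg u).lt_of_ne' (dotProduct_self_eq_zero.not.2 hu))
    refine ⟨(norm3 u)⁻¹ • u, ?_, ?_⟩
    · rw [norm3_smul, abs_inv, abs_of_pos h, inv_mul_cancel₀ h.ne']
    · rw [smul_smul, mul_inv_cancel₀ h.ne', one_smul]

theorem mul_le_lDot {a b : ℝ} (hb : 0 ≤ b) {P Q : Fin 4 → ℝ} (hP0 : 0 ≤ P 0)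
    (hQ0 : 0 ≤ Q 0) (hP : lDot P P = a ^ 2) (hQ : lDot Q Q = b ^ 2) : a * b ≤ lDot P Q := by
  rw [lDot_eq_mul_sub_dotProduct] at hP hQ ⊢
  set p := Fin.tail P
  set q := Fin.tail Q
  have hpp : p ⬝ᵥ p = P 0 ^ 2 - a ^ 2 := by linarith
  have hqq : q ⬝ᵥ q = Q 0 ^ 2 - b ^ 2 := by linarith
  have haP : a ≤ P 0 := le_of_sq_le_sq (by nlinarith [dotProduct_self_nonneg p]) hP0
  have hbQ : b ≤ Q 0 := le_of_sq_le_sq (by nlinarith [dotProduct_self_nonneg q]) hQ0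
  have hab : a * b ≤ P 0 * Q 0 := mul_le_mul haP hbQ hb hP0
  have hpq : (p ⬝ᵥ q) ^ 2 ≤ (P 0 * Q 0 - a * b) ^ 2 :=
    calc (p ⬝ᵥ q) ^ 2 ≤ (p ⬝ᵥ p) * (q ⬝ᵥ q) := sq_dotProduct_le p q
      _ = (P 0 * Q 0 - a * b) ^ 2 - (a * Q 0 - b * P 0) ^ 2 := by rw [hpp, hqq]; ring
      _ ≤ (P 0 * Q 0 - a * b) ^ 2 := by nlinarith [sq_nonneg (a * Q 0 - b * P 0)]
  linarith [le_of_sq_le_sq hpq (by linarith)]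

lemma lDot_mulVec_mulVec (Λ : Matrix (Fin 4) (Fin 4) ℝ) (v w : Fin 4 → ℝ) :
    lDot (Λ *ᵥ v) (Λ *ᵥ w) = v ⬝ᵥ (Λᵀ * minkD * Λ) *ᵥ w := by
  rw [lDot_eq_dotProduct, ← mulVec_mulVec, ← mulVec_mulVec, dotProduct_mulVec v Λᵀ,
    vecMul_transpose]

theorem isLorentz_iff_lDot {Λ : Matrix (Fin 4) (Fin 4) ℝ} :
    IsLorentz Λ ↔ ∀ v w, lDot (Λ *ᵥ v) (Λ *ᵥ w) = lDot v w := by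
  simp_rw [IsLorentz, ext_iff_mulVec, lDot_mulVec_mulVec, lDot_eq_dotProduct]
  refine ⟨fun h v w => by rw [h], fun h w => funext fun i => ?_⟩
  simpa only [single_dotProduct, one_mul] using h (Pi.single i 1) w

namespace IsLorentz

variable {Λ Λ' : Matrix (Fin 4) (Fin 4) ℝ}

lemma lDot_mulVec (hΛ : IsLorentz Λ) (v w : Fin 4 → ℝ) :
    lDot (Λ *ᵥ v) (Λ *ᵥ w) = lDot v w :=
  isLorentz_iff_lDot.1 hΛ v w

lemma isUnit_det (hΛ : IsLorentz Λ) : IsUnit Λ.det := by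
  have h := congrArg det hΛ
  simp only [minkD, det_mul, det_transpose, det_diagonal, Fin.prod_univ_four, cons_val_zero,
    cons_val_one, cons_val, mul_neg, mul_one, neg_neg, neg_mul, neg_inj] at h
  exact .of_mul_eq_one _ h

lemma inv_mulVec_mulVec (hΛ : IsLorentz Λ) (v : Fin 4 → ℝ) : Λ⁻¹ *ᵥ Λ *ᵥ v = v := by
  rw [mulVec_mulVec, nonsing_inv_mul _ hΛ.isUnit_det, one_mulVec]

lemma mul (hΛ : IsLorentz Λ) (hΛ' : IsLorentz Λ') : IsLorentz (Λ * Λ') :=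
  isLorentz_iff_lDot.2 fun v w => by simp only [← mulVec_mulVec, hΛ.lDot_mulVec, hΛ'.lDot_mulVec]

lemma mulVec_apply_zero_eq_zero (hΛ : IsLorentz Λ) {m : ℝ} (hm : m ≠ 0) {K V : Fin 4 → ℝ}
    (hK : Λ *ᵥ K = m • timeUnit) (hKV : lDot K V = 0) : (Λ *ᵥ V) 0 = 0 := by
  have h := hΛ.lDot_mulVec K V
  rw [hK, lDot_smul_left, timeUnit_lDot, hKV] at h
  exact (mul_eq_zero.1 h).resolve_left hm

lemma exists_mulVec_sub_eq_cons (hΛ : IsLorentz Λ) {m : ℝ} (hm : m ≠ 0) {c : ℝ}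
    {P Q : Fin 4 → ℝ} (hP : lDot P P = c ^ 2) (hQ : lDot Q Q = c ^ 2)
    (hK : Λ *ᵥ (P + Q) = m • timeUnit) :
    ∃ x, Λ *ᵥ (P - Q) = Fin.cons 0 x ∧ norm3 x = 2 * √((lDot P Q - c ^ 2) / 2) := by
  have h0 : (Λ *ᵥ (P - Q)) 0 = 0 :=
    hΛ.mulVec_apply_zero_eq_zero hm hK (by
      simp only [lDot_add_left, lDot_sub_right, hP, hQ, lDot_comm Q P]; ring)
  refine ⟨Fin.tail (Λ *ᵥ (P - Q)), by rw [← h0, Fin.cons_self_tail], ?_⟩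
  have hx : Fin.tail (Λ *ᵥ (P - Q)) ⬝ᵥ Fin.tail (Λ *ᵥ (P - Q)) =
      2 ^ 2 * ((lDot P Q - c ^ 2) / 2) := by
    have h := hΛ.lDot_mulVec (P - Q) (P - Q)
    rw [lDot_eq_mul_sub_dotProduct (Λ *ᵥ _), h0] at h
    simp only [lDot_sub_left, lDot_sub_right, hP, hQ, lDot_comm Q P] at h
    linarith
  rw [norm3_eq_sqrt_dotProduct, hx, Real.sqrt_mul (by positivity), Real.sqrt_sq zero_le_two]

lemma eq_half_inv_mulVec_cons (hΛ : IsLorentz Λ) {P Q : Fin 4 → ℝ} {m : ℝ} {x : Fin 3 → ℝ}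
    (hsum : Λ *ᵥ (P + Q) = m • timeUnit) (hdiff : Λ *ᵥ (P - Q) = Fin.cons 0 x) :
    P = (1 / 2 : ℝ) • Λ⁻¹ *ᵥ Fin.cons m x ∧ Q = (1 / 2 : ℝ) • Λ⁻¹ *ᵥ Fin.cons m (-x) := by
  have hP : Fin.cons m x = Λ *ᵥ ((P + Q) + (P - Q)) := by
    rw [mulVec_add, hsum, hdiff, cons_eq_smul_timeUnit_add_cons]
  have hQ : Fin.cons m (-x) = Λ *ᵥ ((P + Q) - (P - Q)) := by
    have hneg : (Fin.cons 0 (-x) : Fin 4 → ℝ) = -Fin.cons 0 x := by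
      ext i
      refine Fin.cases ?_ (fun j => ?_) i <;> simp
    rw [mulVec_sub, hsum, hdiff, cons_eq_smul_timeUnit_add_cons, hneg, sub_eq_add_neg]
  rw [hP, hQ, hΛ.inv_mulVec_mulVec, hΛ.inv_mulVec_mulVec]
  constructor <;> module

end IsLorentz

noncomputable def reflection (w : Fin 4 → ℝ) : Matrix (Fin 4) (Fin 4) ℝ :=
  1 - (2 / lDot w w) • vecMulVec w (minkD *ᵥ w)

lemma reflection_mulVec (w v : Fin 4 → ℝ) :
    reflection w *ᵥ v = v - (2 / lDot w w * lDot w v) • w := by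
  rw [reflection, sub_mulVec, one_mulVec, smul_mulVec, vecMulVec_mulVec, op_smul_eq_smul,
    smul_smul, dotProduct_comm, ← lDot_eq_dotProduct, lDot_comm v]

lemma isLorentz_reflection {w : Fin 4 → ℝ} (hw : lDot w w ≠ 0) : IsLorentz (reflection w) :=
  isLorentz_iff_lDot.2 fun v v' => by
    simp only [reflection_mulVec, lDot_sub_left, lDot_sub_right, lDot_smul_left, lDot_smul_right]
    rw [lDot_comm v w]
    field_simp
    ring

lemma reflection_mulVec_self {w : Fin 4 → ℝ} (hw : lDot w w ≠ 0) : reflection w *ᵥ w = -w := by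
  rw [reflection_mulVec, div_mul_cancel₀ _ hw]
  module

lemma reflection_add_mulVec {u v : Fin 4 → ℝ} (huv : lDot u u = lDot v v)
    (h : lDot (u + v) (u + v) ≠ 0) : reflection (u + v) *ᵥ u = -v := by
  have h2 : lDot (u + v) (u + v) = 2 * lDot (u + v) u := by
    simp only [lDot_add_left, lDot_add_right, lDot_comm v u, huv]; ring
  have ha : lDot (u + v) u ≠ 0 := by rintro ha; rw [h2, ha, mul_zero] at h; exact h rfl
  have h1 : 2 / lDot (u + v) (u + v) * lDot (u + v) u = 1 := by rw [h2]; field_simp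
  rw [reflection_mulVec, h1, one_smul]
  abel

theorem exists_isLorentz_mulVec_eq {K : Fin 4 → ℝ} (hK0 : 0 < K 0) (hKK : 0 < lDot K K) :
    ∃ Λ, IsLorentz Λ ∧ Λ *ᵥ K = √(lDot K K) • timeUnit := by
  set m := √(lDot K K)
  have hm : 0 < m := Real.sqrt_pos.2 hKK
  have he : lDot timeUnit timeUnit ≠ 0 := by simp
  have hsq : lDot K K = lDot (m • timeUnit) (m • timeUnit) := by
    simp [m, Real.mul_self_sqrt hKK.le]
  have hne : lDot (K + m • timeUnit) (K + m • timeUnit) ≠ 0 := by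
    simp only [lDot_add_right, lDot_add_left, lDot_smul_left, timeUnit_lDot, lDot_smul_right,
      lDot_timeUnit, Pi.add_apply, Pi.smul_apply, timeUnit_zero, smul_eq_mul, mul_one]
    positivity
  refine ⟨reflection timeUnit * reflection (K + m • timeUnit),
    (isLorentz_reflection he).mul (isLorentz_reflection hne), ?_⟩
  rw [← mulVec_mulVec, reflection_add_mulVec hsq hne, mulVec_neg, mulVec_smul,
    reflection_mulVec_self he]
  module

theorem lorentz_post_collision_general (c : ℝ) (hc : 0 < c) (P Q P' Q' : Fin 4 → ℝ)
    (hP0 : 0 < P 0) (hQ0 : 0 < Q 0)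
    (hP : lDot P P = c ^ 2) (hQ : lDot Q Q = c ^ 2)
    (hP' : lDot P' P' = c ^ 2) (hQ' : lDot Q' Q' = c ^ 2)
    (hcons : P + Q = P' + Q') :
    ∃ (Λ : Matrix (Fin 4) (Fin 4) ℝ) (ω pbar : Fin 3 → ℝ),
      IsLorentz Λ ∧ norm3 ω = 1 ∧
      Λ.mulVec (P + Q) = ![Real.sqrt (2 * (lDot P Q + c ^ 2)), 0, 0, 0] ∧
      Λ.mulVec (P - Q) = Fin.cons 0 pbar ∧
      norm3 pbar = 2 * Real.sqrt ((lDot P Q - c ^ 2) / 2) ∧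
      P' = (1 / 2 : ℝ) • Λ⁻¹.mulVec
        (Fin.cons (Real.sqrt (2 * (lDot P Q + c ^ 2)))
          ((2 * Real.sqrt ((lDot P Q - c ^ 2) / 2)) • ω)) ∧
      Q' = (1 / 2 : ℝ) • Λ⁻¹.mulVec
        (Fin.cons (Real.sqrt (2 * (lDot P Q + c ^ 2)))
          ((-(2 * Real.sqrt ((lDot P Q - c ^ 2) / 2))) • ω)) := by
  have hPQ : c * c ≤ lDot P Q := mul_le_lDot hc.le hP0.le hQ0.le hP hQ
  have hs : lDot (P + Q) (P + Q) = 2 * (lDot P Q + c ^ 2) := by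
    simp only [lDot_add_left, lDot_add_right, hP, hQ, lDot_comm Q P]; ring
  have hs_pos : 0 < 2 * (lDot P Q + c ^ 2) := by nlinarith
  obtain ⟨Λ, hΛ, hK⟩ := exists_isLorentz_mulVec_eq (add_pos hP0 hQ0) (hs ▸ hs_pos)
  rw [hs] at hK
  have hm : √(2 * (lDot P Q + c ^ 2)) ≠ 0 := (Real.sqrt_pos.2 hs_pos).ne'
  have hP'Q' : lDot P' Q' = lDot P Q := by
    have h := congrArg (fun K => lDot K K) hcons
    simp only [lDot_add_left, lDot_add_right, hP, hQ, hP', hQ', lDot_comm Q P,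
      lDot_comm Q' P'] at h
    linarith
  obtain ⟨pbar, hpbar, hpbar_norm⟩ := hΛ.exists_mulVec_sub_eq_cons hm hP hQ hK
  obtain ⟨u, hu, hu_norm⟩ := hΛ.exists_mulVec_sub_eq_cons hm hP' hQ' (hcons ▸ hK)
  obtain ⟨ω, hω, hωu⟩ := exists_norm3_eq_one_and_eq_smul u
  rw [hu_norm, hP'Q'] at hωu
  obtain ⟨hP'_eq, hQ'_eq⟩ := hΛ.eq_half_inv_mulVec_cons (hcons ▸ hK) (hωu ▸ hu)
  exact ⟨Λ, ω, pbar, hΛ, hω, hK.trans (smul_timeUnit _), hpbar, hpbar_norm, hP'_eq,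
    by rwa [neg_smul]⟩

/-- For four-vectors P,Q,P′,Q′ on the mass shell with P+Q = P′+Q′, there exist a Lorentz
transformation Λ and a unit vector ω ∈ 𝕊² such that Λ(P+Q) = (√s,0,0,0)ᵀ,
Λ(P−Q) = (0,p̄)ᵀ with |p̄| = 2g, and P′ = ½Λ⁻¹(√s, 2gω)ᵀ, Q′ = ½Λ⁻¹(√s, −2gω)ᵀ. -/
theorem lorentz_post_collision (c : ℝ) (hc : 0 < c) (P Q P' Q' : Fin 4 → ℝ)
    (hP0 : 0 < P 0) (hQ0 : 0 < Q 0) (hP'0 : 0 < P' 0) (hQ'0 : 0 < Q' 0)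
    (hP : lDot P P = c ^ 2) (hQ : lDot Q Q = c ^ 2)
    (hP' : lDot P' P' = c ^ 2) (hQ' : lDot Q' Q' = c ^ 2)
    (hcons : P + Q = P' + Q') :
    ∃ (Λ : Matrix (Fin 4) (Fin 4) ℝ) (ω pbar : Fin 3 → ℝ),
      IsLorentz Λ ∧ norm3 ω = 1 ∧
      Λ.mulVec (P + Q) = ![Real.sqrt (2 * (lDot P Q + c ^ 2)), 0, 0, 0] ∧
      Λ.mulVec (P - Q) = Fin.cons 0 pbar ∧
      norm3 pbar = 2 * Real.sqrt ((lDot P Q - c ^ 2) / 2) ∧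
      P' = (1 / 2 : ℝ) • Λ⁻¹.mulVec
        (Fin.cons (Real.sqrt (2 * (lDot P Q + c ^ 2)))
          ((2 * Real.sqrt ((lDot P Q - c ^ 2) / 2)) • ω)) ∧
      Q' = (1 / 2 : ℝ) • Λ⁻¹.mulVec
        (Fin.cons (Real.sqrt (2 * (lDot P Q + c ^ 2)))
          ((-(2 * Real.sqrt ((lDot P Q - c ^ 2) / 2))) • ω)) :=
  lorentz_post_collision_general c hc P Q P' Q' hP0 hQ0 hP hQ hP' hQ' hcons
end

section
/- Let 𝔠 > 0 and let Λ be a Lorentz transformation. Then there exists a constant c > 0, depending only on Λ (and 𝔠), such that for all p, q ∈ ℝ³, writing P = (√(𝔠²+|p|²), p), Q = (√(𝔠²+|q|²), q), and p̃, q̃ ∈ ℝ³ for the spatial parts of ΛP and ΛQ respectively, one has (1/c)·|p − q| ≤ |p̃ − q̃| ≤ c·|p − q|. -/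
open Matrix

/-- The mass-shell four-vector P = (√(c²+|p|²), p). -/
noncomputable def shell (c : ℝ) (p : Fin 3 → ℝ) : Fin 4 → ℝ :=
  Fin.cons (Real.sqrt (c ^ 2 + norm3 p ^ 2)) p

/-!
A Lorentz transformation preserves the Minkowski form, and any two mass-shell vectors have
positive Minkowski product, so `Λ` maps the whole mass shell into one sheet of the hyperboloid
`X · X = 𝔠²`. On a sheet the time component is `±√(𝔠² + |x|²)`, a function of the spatial part
`x`; hence `P` is a fixed linear image of the mass-shell vector over the spatial part of `ΛP`.
Both `p ↦ p̃` and its inverse are therefore spatial parts of linear images of mass-shell vectors,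
and these are Lipschitz because `p ↦ (√(𝔠² + |p|²), p)` is.
-/

attribute [local instance] Matrix.linftyOpNormedAddCommGroup

lemma norm3_eq_norm_toLp (v : Fin 3 → ℝ) : norm3 v = ‖WithLp.toLp 2 v‖ := by
  simp [norm3, EuclideanSpace.norm_eq, Fin.sum_univ_three]

lemma norm3_sq (v : Fin 3 → ℝ) : norm3 v ^ 2 = v ⬝ᵥ v := by
  rw [norm3, Real.sq_sqrt (by positivity)]
  simp [dotProduct, Fin.sum_univ_three, sq]

lemma abs_dotProduct_le_norm3_mul_norm3 (u v : Fin 3 → ℝ) : |u ⬝ᵥ v| ≤ norm3 u * norm3 v := by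
  simpa [norm3_eq_norm_toLp, EuclideanSpace.inner_eq_star_dotProduct, dotProduct_comm]
    using abs_real_inner_le_norm (WithLp.toLp 2 u) (WithLp.toLp 2 v)

lemma abs_norm3_sub_norm3_le (p q : Fin 3 → ℝ) : |norm3 p - norm3 q| ≤ norm3 (p - q) := by
  simpa only [norm3_eq_norm_toLp, WithLp.toLp_sub] using abs_norm_sub_norm_le _ _

lemma abs_le_norm3 (v : Fin 3 → ℝ) (i : Fin 3) : |v i| ≤ norm3 v := by
  rw [norm3_eq_norm_toLp, ← Real.norm_eq_abs]
  exact PiLp.norm_apply_le (WithLp.toLp 2 v) i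

lemma norm3_le_sqrt_three_mul_norm (v : Fin 3 → ℝ) : norm3 v ≤ √3 * ‖v‖ := by
  have hsq : ∀ i, v i ^ 2 ≤ ‖v‖ ^ 2 := fun i => by
    rw [← sq_abs, ← Real.norm_eq_abs]
    gcongr
    exact norm_le_pi_norm v i
  calc norm3 v ≤ √(3 * ‖v‖ ^ 2) := Real.sqrt_le_sqrt (by linarith [hsq 0, hsq 1, hsq 2])
    _ = √3 * ‖v‖ := by rw [Real.sqrt_mul zero_le_three, Real.sqrt_sq (norm_nonneg v)]

lemma norm_tail_le {n : ℕ} {E : Type*} [SeminormedAddCommGroup E] (X : Fin (n + 1) → E) :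
    ‖Fin.tail X‖ ≤ ‖X‖ :=
  (pi_norm_le_iff_of_nonneg (norm_nonneg X)).2 fun i => norm_le_pi_norm X i.succ

lemma sq_add_mul_le_sqrt_mul_sqrt (c a b : ℝ) :
    c ^ 2 + a * b ≤ √(c ^ 2 + a ^ 2) * √(c ^ 2 + b ^ 2) := by
  rw [← Real.sqrt_mul (by positivity)]
  exact Real.le_sqrt_of_sq_le (by nlinarith [sq_nonneg (c * (a - b))])

lemma abs_sqrt_sq_add_sq_sub_le (c a b : ℝ) :
    |√(c ^ 2 + a ^ 2) - √(c ^ 2 + b ^ 2)| ≤ |a - b| := by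
  have hu := Real.sq_sqrt (by positivity : 0 ≤ c ^ 2 + a ^ 2)
  have hv := Real.sq_sqrt (by positivity : 0 ≤ c ^ 2 + b ^ 2)
  exact sq_le_sq.1 (by nlinarith [sq_add_mul_le_sqrt_mul_sqrt c a b])

lemma shell_zero (c : ℝ) (p : Fin 3 → ℝ) : shell c p 0 = √(c ^ 2 + norm3 p ^ 2) := rfl

lemma tail_shell (c : ℝ) (p : Fin 3 → ℝ) : Fin.tail (shell c p) = p := Fin.tail_cons _ _

lemma norm_shell_sub_shell_le (c : ℝ) (p q : Fin 3 → ℝ) :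
    ‖shell c p - shell c q‖ ≤ norm3 (p - q) := by
  refine (pi_norm_le_iff_of_nonneg (Real.sqrt_nonneg _)).2 fun k => ?_
  rw [Real.norm_eq_abs]
  refine Fin.cases ?_ (fun i => abs_le_norm3 (p - q) i) k
  calc |(shell c p - shell c q) 0| ≤ |norm3 p - norm3 q| := abs_sqrt_sq_add_sq_sub_le c _ _
    _ ≤ norm3 (p - q) := abs_norm3_sub_norm3_le p q

lemma norm3_tail_mulVec_shell_sub_le (c : ℝ) (A : Matrix (Fin 4) (Fin 4) ℝ) (p q : Fin 3 → ℝ) :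
    norm3 (Fin.tail (A *ᵥ shell c p) - Fin.tail (A *ᵥ shell c q)) ≤
      √3 * ‖A‖ * norm3 (p - q) :=
  calc norm3 (Fin.tail (A *ᵥ shell c p) - Fin.tail (A *ᵥ shell c q))
      ≤ √3 * ‖Fin.tail (A *ᵥ (shell c p - shell c q))‖ := by
        rw [mulVec_sub]; exact norm3_le_sqrt_three_mul_norm _
    _ ≤ √3 * (‖A‖ * ‖shell c p - shell c q‖) := by
        gcongr; exact (norm_tail_le _).trans (linfty_opNorm_mulVec _ _)
    _ ≤ √3 * ‖A‖ * norm3 (p - q) := by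
        rw [mul_assoc]; gcongr; exact norm_shell_sub_shell_le c p q

noncomputable def mink (X Y : Fin 4 → ℝ) : ℝ := X ⬝ᵥ minkD *ᵥ Y

lemma mink_eq (X Y : Fin 4 → ℝ) : mink X Y = X 0 * Y 0 - Fin.tail X ⬝ᵥ Fin.tail Y := by
  simp only [mink, dotProduct, minkD, mulVec_diagonal, Fin.sum_univ_four, Fin.sum_univ_three,
    Fin.tail, cons_val_zero, cons_val_one, cons_val, Fin.succ_zero_eq_one, Fin.succ_one_eq_two,
    Fin.reduceSucc]
  ring

lemma mink_self (X : Fin 4 → ℝ) : mink X X = X 0 ^ 2 - norm3 (Fin.tail X) ^ 2 := by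
  rw [mink_eq, norm3_sq, sq]

lemma IsLorentz.mink_mulVec {Λ : Matrix (Fin 4) (Fin 4) ℝ} (hΛ : IsLorentz Λ) (X Y : Fin 4 → ℝ) :
    mink (Λ *ᵥ X) (Λ *ᵥ Y) = mink X Y := by
  rw [mink, mink, ← vecMul_transpose, ← dotProduct_mulVec, mulVec_mulVec, mulVec_mulVec, hΛ]

lemma minkD_mul_self : minkD * minkD = 1 := by
  rw [minkD, diagonal_mul_diagonal, ← diagonal_one]
  congr 1; ext i; fin_cases i <;> norm_num

lemma IsLorentz.minkD_mul_transpose_mul_minkD_mul_self {Λ : Matrix (Fin 4) (Fin 4) ℝ}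
    (hΛ : IsLorentz Λ) : minkD * Λᵀ * minkD * Λ = 1 :=
  calc minkD * Λᵀ * minkD * Λ = minkD * (Λᵀ * minkD * Λ) := by simp only [mul_assoc]
    _ = 1 := by rw [hΛ, minkD_mul_self]

lemma mink_shell_self (c : ℝ) (p : Fin 3 → ℝ) : mink (shell c p) (shell c p) = c ^ 2 := by
  rw [mink_self, shell_zero, tail_shell, Real.sq_sqrt (by positivity)]
  ring

lemma mink_shell_pos {c : ℝ} (hc : 0 < c) (p q : Fin 3 → ℝ) :
    0 < mink (shell c p) (shell c q) := by
  rw [mink_eq, shell_zero, shell_zero, tail_shell, tail_shell]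
  have := sq_add_mul_le_sqrt_mul_sqrt c (norm3 p) (norm3 q)
  have := (le_abs_self _).trans (abs_dotProduct_le_norm3_mul_norm3 p q)
  nlinarith

/-- Reverse Cauchy–Schwarz: for timelike `X`, `Y` one has `|X₀ Y₀| > |x| |y| ≥ |x ⬝ y|`, so the
sign of `X · Y` is that of `X₀ Y₀`. -/
lemma apply_zero_mul_pos_of_mink_pos {X Y : Fin 4 → ℝ} (hX : 0 < mink X X)
    (hY : 0 < mink Y Y) (hXY : 0 < mink X Y) : 0 < X 0 * Y 0 := by
  rw [mink_self] at hX hY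
  rw [mink_eq] at hXY
  have ha : 0 ≤ norm3 (Fin.tail X) := Real.sqrt_nonneg _
  have hb : 0 ≤ norm3 (Fin.tail Y) := Real.sqrt_nonneg _
  have hdot := (neg_abs_le _).trans'
    (neg_le_neg (abs_dotProduct_le_norm3_mul_norm3 (Fin.tail X) (Fin.tail Y)))
  have hsq : (norm3 (Fin.tail X) * norm3 (Fin.tail Y)) ^ 2 < (X 0 * Y 0) ^ 2 := by
    rw [mul_pow, mul_pow]
    exact mul_lt_mul'' (by linarith) (by linarith) (by positivity) (by positivity)
  by_contra! h
  nlinarith [mul_nonneg ha hb]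

lemma eq_shell_tail_of_mink_self_of_pos {c : ℝ} {X : Fin 4 → ℝ} (hX : mink X X = c ^ 2)
    (h0 : 0 < X 0) : X = shell c (Fin.tail X) := by
  conv_lhs => rw [← Fin.cons_self_tail X]
  rw [shell, ← Real.sqrt_sq h0.le]
  congr 2
  linarith [mink_self X]

noncomputable def timeReversal : Matrix (Fin 4) (Fin 4) ℝ := diagonal ![-1, 1, 1, 1]

lemma timeReversal_mulVec (X : Fin 4 → ℝ) :
    timeReversal *ᵥ X = Fin.cons (-X 0) (Fin.tail X) := by
  ext k
  refine Fin.cases ?_ (fun i => ?_) k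
  · simp [timeReversal, mulVec_diagonal]
  · rw [Fin.cons_succ, Fin.tail, timeReversal, mulVec_diagonal]
    fin_cases i <;> simp

lemma eq_timeReversal_mulVec_shell_tail_of_mink_self_of_neg {c : ℝ} {X : Fin 4 → ℝ}
    (hX : mink X X = c ^ 2) (h0 : X 0 < 0) : X = timeReversal *ᵥ shell c (Fin.tail X) := by
  conv_lhs => rw [← Fin.cons_self_tail X, ← neg_neg (X 0)]
  rw [timeReversal_mulVec, tail_shell, shell_zero, ← Real.sqrt_sq (neg_nonneg.2 h0.le)]
  congr 3
  linarith [mink_self X]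

lemma IsLorentz.exists_mulVec_shell_eq {Λ : Matrix (Fin 4) (Fin 4) ℝ} (hΛ : IsLorentz Λ)
    {c : ℝ} (hc : 0 < c) : ∃ E : Matrix (Fin 4) (Fin 4) ℝ,
      ∀ p, Λ *ᵥ shell c p = E *ᵥ shell c (Fin.tail (Λ *ᵥ shell c p)) := by
  have hself : ∀ p, mink (Λ *ᵥ shell c p) (Λ *ᵥ shell c p) = c ^ 2 := fun p => by
    rw [hΛ.mink_mulVec, mink_shell_self]
  have hsign : ∀ p q, 0 < (Λ *ᵥ shell c p) 0 * (Λ *ᵥ shell c q) 0 := fun p q =>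
    apply_zero_mul_pos_of_mink_pos (by rw [hself]; positivity) (by rw [hself]; positivity)
      (by rw [hΛ.mink_mulVec]; exact mink_shell_pos hc p q)
  rcases (mul_self_pos.1 (hsign 0 0)).lt_or_gt with hneg | hpos
  · exact ⟨timeReversal, fun p => eq_timeReversal_mulVec_shell_tail_of_mink_self_of_neg (hself p)
      ((neg_iff_neg_of_mul_pos (hsign p 0)).2 hneg)⟩
  · refine ⟨1, fun p => ?_⟩
    rw [one_mulVec]
    exact eq_shell_tail_of_mink_self_of_pos (hself p) ((pos_iff_pos_of_mul_pos (hsign p 0)).2 hpos)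

lemma IsLorentz.exists_shell_eq_mulVec_shell_tail {Λ : Matrix (Fin 4) (Fin 4) ℝ}
    (hΛ : IsLorentz Λ) {c : ℝ} (hc : 0 < c) : ∃ B : Matrix (Fin 4) (Fin 4) ℝ,
      ∀ p, shell c p = B *ᵥ shell c (Fin.tail (Λ *ᵥ shell c p)) := by
  obtain ⟨E, hE⟩ := hΛ.exists_mulVec_shell_eq hc
  refine ⟨minkD * Λᵀ * minkD * E, fun p => ?_⟩
  rw [← mulVec_mulVec, ← hE, mulVec_mulVec, hΛ.minkD_mul_transpose_mul_minkD_mul_self, one_mulVec]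

/-- For a Lorentz transformation Λ there is a constant C > 0, depending only on Λ (and c),
such that the spatial parts p̃, q̃ of ΛP, ΛQ satisfy (1/C)|p−q| ≤ |p̃−q̃| ≤ C|p−q|. -/
theorem lorentz_spatial_equivalence (c : ℝ) (hc : 0 < c)
    (Λ : Matrix (Fin 4) (Fin 4) ℝ) (hΛ : IsLorentz Λ) :
    ∃ C > 0, ∀ p q : Fin 3 → ℝ,
      (1 / C) * norm3 (p - q) ≤
        norm3 (fun j => Λ.mulVec (shell c p) j.succ - Λ.mulVec (shell c q) j.succ) ∧
      norm3 (fun j => Λ.mulVec (shell c p) j.succ - Λ.mulVec (shell c q) j.succ) ≤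
        C * norm3 (p - q) := by
  obtain ⟨B, hB⟩ := hΛ.exists_shell_eq_mulVec_shell_tail hc
  set K₁ := √3 * ‖Λ‖
  set K₂ := √3 * ‖B‖
  have hK₁ : 0 ≤ K₁ := by positivity
  have hK₂ : 0 ≤ K₂ := by positivity
  refine ⟨K₁ + K₂ + 1, by positivity, fun p q => ?_⟩
  set p' := Fin.tail (Λ *ᵥ shell c p)
  set q' := Fin.tail (Λ *ᵥ shell c q)
  change _ ≤ norm3 (p' - q') ∧ norm3 (p' - q') ≤ _
  constructor
  · rw [one_div, inv_mul_le_iff₀ (by positivity)]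
    calc norm3 (p - q) = norm3 (Fin.tail (B *ᵥ shell c p') - Fin.tail (B *ᵥ shell c q')) := by
          rw [← hB, ← hB, tail_shell, tail_shell]
      _ ≤ K₂ * norm3 (p' - q') := norm3_tail_mulVec_shell_sub_le c B p' q'
      _ ≤ (K₁ + K₂ + 1) * norm3 (p' - q') :=
          mul_le_mul_of_nonneg_right (by linarith) (Real.sqrt_nonneg _)
  · calc norm3 (p' - q') ≤ K₁ * norm3 (p - q) := norm3_tail_mulVec_shell_sub_le c Λ p q
      _ ≤ (K₁ + K₂ + 1) * norm3 (p - q) :=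
          mul_le_mul_of_nonneg_right (by linarith) (Real.sqrt_nonneg _)
end

section
/- Let 𝔠 > 0, z > 0, T := 𝔠²/z, and define a₁ := K₃(z)/K₂(z), a₂ := −a₁² + 6a₁/z + 1, a₃ := −a₁³ + 6a₁²/z − 6a₁/z² + a₁ − 1/z, where K_α(z) := ∫₀^∞ e^{−z cosh t} cosh(αt) dt. Assume a₁ > 0, a₃ > 0, a₂ − a₁/z > 0 and a₃ + a₂/z − a₁/z² > 0. Let u₁ ∈ ℝ, u₀ := √(𝔠²+u₁²), M := √((1/z)(a₂ − a₁/z)(a₃ + a₂/z − a₁/z²)), A₂ := a₃u₀²/𝔠² + a₂/z − a₁/z², and λ₁ := (a₃u₀u₁ − 𝔠²M)/(𝔠A₂). Then λ₁ = 0 if and only if u₁ = √( T · (za₂ − a₁)/(za₃) ). -/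
open MeasureTheory

/-- The modified Bessel function K_α(z) = ∫₀^∞ e^{−z cosh t} cosh(αt) dt. -/
noncomputable def Kb (α z : ℝ) : ℝ :=
  ∫ t in Set.Ioi (0 : ℝ), Real.exp (-z * Real.cosh t) * Real.cosh (α * t)

/-! With `p := (a₂ − a₁/z)/z > 0` one has `M = √(p(a₃ + p))` and `T(za₂ − a₁)/(za₃) = c²p/a₃`,
while the denominator `c A₂` of `λ₁` is positive. So `λ₁ = 0` says `a₃ u₀ u₁ = c² √(p(a₃ + p))`;
this forces `u₁ > 0`, and after squaring it becomes
`(a₃u₁² − c²p)(a₃u₁² + a₃c² + c²p) = 0`, whose second factor is positive. -/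

lemma sq_mul_sq_add_mul_eq_iff {a c p x : ℝ} (ha : 0 < a) (hc : 0 < c) (hp : 0 < p) (hx : 0 ≤ x) :
    a ^ 2 * (c ^ 2 + x) * x = c ^ 4 * (p * (a + p)) ↔ x = c ^ 2 * p / a := by
  have hfactor : a ^ 2 * (c ^ 2 + x) * x - c ^ 4 * (p * (a + p))
      = (a * x - c ^ 2 * p) * (a * x + a * c ^ 2 + c ^ 2 * p) := by ring
  have hpos : a * x + a * c ^ 2 + c ^ 2 * p ≠ 0 := by positivity
  rw [← sub_eq_zero, hfactor, mul_eq_zero, or_iff_left hpos, sub_eq_zero, eq_div_iff ha.ne']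
  constructor <;> intro h <;> linarith

lemma mul_sqrt_sq_add_sq_mul_eq_iff {a c p u : ℝ} (ha : 0 < a) (hc : 0 < c) (hp : 0 < p) :
    a * √(c ^ 2 + u ^ 2) * u = c ^ 2 * √(p * (a + p)) ↔ u = √(c ^ 2 * p / a) := by
  have hrhs : 0 < c ^ 2 * √(p * (a + p)) := by positivity
  suffices hu : 0 ≤ u → (a * √(c ^ 2 + u ^ 2) * u = c ^ 2 * √(p * (a + p)) ↔
      u = √(c ^ 2 * p / a)) by
    constructor
    · intro h
      refine (hu ?_).mp h
      by_contra! hneg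
      have : a * √(c ^ 2 + u ^ 2) * u < 0 := mul_neg_of_pos_of_neg (by positivity) hneg
      linarith
    · intro h
      exact (hu (h ▸ Real.sqrt_nonneg _)).mpr h
  intro hu
  rw [← sq_eq_sq₀ (by positivity) hrhs.le, eq_comm (a := u),
    Real.sqrt_eq_iff_eq_sq (by positivity) hu, eq_comm (b := u ^ 2),
    ← sq_mul_sq_add_mul_eq_iff ha hc hp (sq_nonneg u)]
  rw [mul_pow, mul_pow, mul_pow, Real.sq_sqrt (by positivity), Real.sq_sqrt (by positivity)]
  ring_nf

theorem lambda_one_eq_zero_iff_general (c z T a₁ a₂ a₃ u₁ u₀ M A₂ lam₁ : ℝ)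
    (hc : 0 < c) (hz : 0 < z) (hT : T = c ^ 2 / z)
    (hpos3 : 0 < a₃)
    (hpos2 : 0 < a₂ - a₁ / z)
    (hu₀ : u₀ = Real.sqrt (c ^ 2 + u₁ ^ 2))
    (hM : M = Real.sqrt ((1 / z) * (a₂ - a₁ / z) * (a₃ + a₂ / z - a₁ / z ^ 2)))
    (hA₂ : A₂ = a₃ * u₀ ^ 2 / c ^ 2 + a₂ / z - a₁ / z ^ 2)
    (hlam : lam₁ = (a₃ * u₀ * u₁ - c ^ 2 * M) / (c * A₂)) :
    lam₁ = 0 ↔ u₁ = Real.sqrt (T * (z * a₂ - a₁) / (z * a₃)) := by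
  set p := (a₂ - a₁ / z) / z with hp_def
  have hp : 0 < p := by positivity
  have hM' : M = √(p * (a₃ + p)) := by rw [hM]; congr 1; ring
  have hA₂' : A₂ = a₃ * u₀ ^ 2 / c ^ 2 + p := by rw [hA₂]; ring
  have hT' : T * (z * a₂ - a₁) / (z * a₃) = c ^ 2 * p / a₃ := by
    rw [hT, hp_def]; field_simp
  have hden : c * A₂ ≠ 0 := by rw [hA₂']; positivity
  rw [hlam, div_eq_zero_iff, or_iff_left hden, sub_eq_zero, hT', hu₀, hM']
  exact mul_sqrt_sq_add_sq_mul_eq_iff hpos3 hc hp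

/-- λ₁ = 0 if and only if u₁ = √(T(za₂ − a₁)/(za₃)). -/
theorem lambda_one_eq_zero_iff (c z T a₁ a₂ a₃ u₁ u₀ M A₂ lam₁ : ℝ)
    (hc : 0 < c) (hz : 0 < z) (hT : T = c ^ 2 / z)
    (ha₁ : a₁ = Kb 3 z / Kb 2 z)
    (ha₂ : a₂ = -a₁ ^ 2 + 6 * a₁ / z + 1)
    (ha₃ : a₃ = -a₁ ^ 3 + 6 * a₁ ^ 2 / z - 6 * a₁ / z ^ 2 + a₁ - 1 / z)
    (hpos1 : 0 < a₁) (hpos3 : 0 < a₃)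
    (hpos2 : 0 < a₂ - a₁ / z) (hpos4 : 0 < a₃ + a₂ / z - a₁ / z ^ 2)
    (hu₀ : u₀ = Real.sqrt (c ^ 2 + u₁ ^ 2))
    (hM : M = Real.sqrt ((1 / z) * (a₂ - a₁ / z) * (a₃ + a₂ / z - a₁ / z ^ 2)))
    (hA₂ : A₂ = a₃ * u₀ ^ 2 / c ^ 2 + a₂ / z - a₁ / z ^ 2)
    (hlam : lam₁ = (a₃ * u₀ * u₁ - c ^ 2 * M) / (c * A₂)) :
    lam₁ = 0 ↔ u₁ = Real.sqrt (T * (z * a₂ - a₁) / (z * a₃)) :=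
  lambda_one_eq_zero_iff_general c z T a₁ a₂ a₃ u₁ u₀ M A₂ lam₁ hc hz hT hpos3 hpos2 hu₀ hM hA₂ hlam
end

section
/- Let 𝔠 > 0, z > 0, T := 𝔠²/z, and define a₁ := K₃(z)/K₂(z), a₂ := −a₁² + 6a₁/z + 1, a₃ := −a₁³ + 6a₁²/z − 6a₁/z² + a₁ − 1/z, where K_α(z) := ∫₀^∞ e^{−z cosh t} cosh(αt) dt. Assume a₁ > 0, a₃ > 0, a₂ − a₁/z > 0 and a₃ + a₂/z − a₁/z² > 0. Let u₁ ∈ ℝ, u₀ := √(𝔠²+u₁²), M := √((1/z)(a₂ − a₁/z)(a₃ + a₂/z − a₁/z²)), A₂ := a₃u₀²/𝔠² + a₂/z − a₁/z², and λ₅ := (a₃u₀u₁ + 𝔠²M)/(𝔠A₂). Then λ₅ = 0 if and only if u₁ = −√( T · (za₂ − a₁)/(za₃) ). -/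
/-!
With `f u = u * √(c² + u²)` the numerator of `λ₅` is `a₃ f(u₁) + c² M`. Squaring shows that `M` and
the squared sound speed `s = c∞²` are tied by `a₃ f(√s) = c² M`. Since `f` is odd and strictly
increasing, `λ₅ = 0` iff `f u₁ = f (-√s)`, i.e. iff `u₁ = -√s`.
-/

open MeasureTheory

open Real

theorem strictMono_mul_sqrt_sq_add_sq (c : ℝ) : StrictMono fun u : ℝ => u * √(c ^ 2 + u ^ 2) := by
  refine strictMono_of_odd_strictMonoOn_nonneg (fun u => by simp only [neg_sq]; ring) ?_
  intro x hx y _ hxy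
  have hy : 0 < y := lt_of_le_of_lt hx hxy
  calc x * √(c ^ 2 + x ^ 2) ≤ x * √(c ^ 2 + y ^ 2) := by gcongr
    _ < y * √(c ^ 2 + y ^ 2) := by gcongr

theorem mul_sqrt_mul_sqrt_sq_add_eq {c z a₁ a₂ a₃ s : ℝ} (hz : z ≠ 0) (ha₃ : 0 < a₃)
    (hs : s = c ^ 2 / z * (z * a₂ - a₁) / (z * a₃)) (hs₀ : 0 ≤ s)
    (hM₀ : 0 ≤ (1 / z) * (a₂ - a₁ / z) * (a₃ + a₂ / z - a₁ / z ^ 2)) :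
    a₃ * (√s * √(c ^ 2 + s)) =
      c ^ 2 * √((1 / z) * (a₂ - a₁ / z) * (a₃ + a₂ / z - a₁ / z ^ 2)) := by
  rw [← sq_eq_sq₀ (by positivity) (by positivity), mul_pow, mul_pow, mul_pow,
    sq_sqrt hs₀, sq_sqrt (by positivity), sq_sqrt hM₀]
  subst hs
  field_simp
  ring

theorem lambda_five_eq_zero_iff_general (c z T a₁ a₂ a₃ u₁ u₀ M A₂ lam₅ : ℝ)
    (hc : 0 < c) (hz : 0 < z) (hT : T = c ^ 2 / z)
    (hpos3 : 0 < a₃)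
    (hpos2 : 0 < a₂ - a₁ / z) (hpos4 : 0 < a₃ + a₂ / z - a₁ / z ^ 2)
    (hu₀ : u₀ = Real.sqrt (c ^ 2 + u₁ ^ 2))
    (hM : M = Real.sqrt ((1 / z) * (a₂ - a₁ / z) * (a₃ + a₂ / z - a₁ / z ^ 2)))
    (hA₂ : A₂ = a₃ * u₀ ^ 2 / c ^ 2 + a₂ / z - a₁ / z ^ 2)
    (hlam : lam₅ = (a₃ * u₀ * u₁ + c ^ 2 * M) / (c * A₂)) :
    lam₅ = 0 ↔ u₁ = -Real.sqrt (T * (z * a₂ - a₁) / (z * a₃)) := by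
  set s := T * (z * a₂ - a₁) / (z * a₃) with hs
  have hA₂ : 0 < A₂ := by
    rw [hA₂, add_sub_assoc, show a₂ / z - a₁ / z ^ 2 = (a₂ - a₁ / z) / z by field_simp]
    positivity
  have hs₀ : 0 ≤ s := by
    have : 0 < z * a₂ - a₁ := by rw [sub_pos, div_lt_iff₀ hz] at hpos2; linarith
    rw [hs, hT]; positivity
  have hsM : a₃ * (√s * √(c ^ 2 + s)) = c ^ 2 * M :=
    hM ▸ mul_sqrt_mul_sqrt_sq_add_eq hz.ne' hpos3 (by rw [hs, hT]) hs₀ (by positivity)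
  have hf_neg_sqrt : -√s * √(c ^ 2 + (-√s) ^ 2) = -(√s * √(c ^ 2 + s)) := by
    rw [neg_sq, sq_sqrt hs₀, neg_mul]
  rw [hlam, div_eq_zero_iff, or_iff_left (by positivity)]
  calc a₃ * u₀ * u₁ + c ^ 2 * M = 0
      ↔ a₃ * (u₁ * √(c ^ 2 + u₁ ^ 2)) = a₃ * (-√s * √(c ^ 2 + (-√s) ^ 2)) := by
        rw [hf_neg_sqrt, mul_neg, hsM, hu₀]
        constructor <;> intro h <;> linear_combination h
    _ ↔ u₁ = -√s := by
        rw [mul_right_inj' hpos3.ne', (strictMono_mul_sqrt_sq_add_sq c).injective.eq_iff]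

/-- λ₅ = 0 if and only if u₁ = −√(T(za₂ − a₁)/(za₃)). -/
theorem lambda_five_eq_zero_iff (c z T a₁ a₂ a₃ u₁ u₀ M A₂ lam₅ : ℝ)
    (hc : 0 < c) (hz : 0 < z) (hT : T = c ^ 2 / z)
    (ha₁ : a₁ = Kb 3 z / Kb 2 z)
    (ha₂ : a₂ = -a₁ ^ 2 + 6 * a₁ / z + 1)
    (ha₃ : a₃ = -a₁ ^ 3 + 6 * a₁ ^ 2 / z - 6 * a₁ / z ^ 2 + a₁ - 1 / z)
    (hpos1 : 0 < a₁) (hpos3 : 0 < a₃)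
    (hpos2 : 0 < a₂ - a₁ / z) (hpos4 : 0 < a₃ + a₂ / z - a₁ / z ^ 2)
    (hu₀ : u₀ = Real.sqrt (c ^ 2 + u₁ ^ 2))
    (hM : M = Real.sqrt ((1 / z) * (a₂ - a₁ / z) * (a₃ + a₂ / z - a₁ / z ^ 2)))
    (hA₂ : A₂ = a₃ * u₀ ^ 2 / c ^ 2 + a₂ / z - a₁ / z ^ 2)
    (hlam : lam₅ = (a₃ * u₀ * u₁ + c ^ 2 * M) / (c * A₂)) :
    lam₅ = 0 ↔ u₁ = -Real.sqrt (T * (z * a₂ - a₁) / (z * a₃)) :=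
  lambda_five_eq_zero_iff_general c z T a₁ a₂ a₃ u₁ u₀ M A₂ lam₅ hc hz hT hpos3 hpos2 hpos4 hu₀ hM
    hA₂ hlam
end
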